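/- arXiv:1008.2108 — 2 statements merged into one kernel-verified Lean document; each statement's English description precedes it below -/
import Mathlib

section
/- Let A be an action set with partition {A^r, A^l, A^bi}, let a_bi ∈ A^bi and a_r ∈ A^r, and for n ≥ 0 write a_bi^n.t for the n-fold prefixing of t by a_bi. Then for every n ≥ 0, the processes p_n = a_r.(a_bi^n.(a_r.0)) and q_n = a_r.(a_bi^n.(a_r.0)) + a_r.(a_bi^n.0) satisfy p_n ≡_CC q_n. -/
inductive Proc (A : Type) : Type
  | nil : Proc A
  | pre : A → Proc A → Proc A
  | add : Proc A → Proc A → Proc A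

inductive Step {A : Type} : Proc A → A → Proc A → Prop
  | pre (a : A) (p : Proc A) : Step (.pre a p) a p
  | addL {p : Proc A} {a : A} {p' : Proc A} (q : Proc A) :
      Step p a p' → Step (.add p q) a p'
  | addR {q : Proc A} {a : A} {q' : Proc A} (p : Proc A) :
      Step q a q' → Step (.add p q) a q'

/-- `initials p` is the set `I(p)` of actions that `p` can immediately perform. -/
def initials {A : Type} (p : Proc A) : Set A := {a | ∃ p', Step p a p'}

/-- `{Ar, Al, Abi}` is a partition of the action set `A` (cells may be empty). -/
def IsPartition {A : Type} (Ar Al Abi : Set A) : Prop :=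
  (Ar ∪ Al ∪ Abi = Set.univ) ∧ Disjoint Ar Al ∧ Disjoint Ar Abi ∧ Disjoint Al Abi

/-- Covariant-contravariant simulation w.r.t. covariant actions `Ar`,
contravariant actions `Al` and bivariant actions `Abi`. -/
def IsCCSim {A : Type} (Ar Al Abi : Set A) (S : Proc A → Proc A → Prop) : Prop :=
  ∀ p q, S p q →
    (∀ a ∈ Ar ∪ Abi, ∀ p', Step p a p' → ∃ q', Step q a q' ∧ S p' q') ∧
    (∀ a ∈ Al ∪ Abi, ∀ q', Step q a q' → ∃ p', Step p a p' ∧ S p' q')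

/-- The covariant-contravariant simulation preorder `p ≲_CC q`. -/
def ccLe {A : Type} (Ar Al Abi : Set A) (p q : Proc A) : Prop :=
  ∃ S, IsCCSim Ar Al Abi S ∧ S p q

/-- Covariant-contravariant simulation equivalence `p ≡_CC q`. -/
def ccEq {A : Type} (Ar Al Abi : Set A) (p q : Proc A) : Prop :=
  ccLe Ar Al Abi p q ∧ ccLe Ar Al Abi q p

/-- Conformance simulation. -/
def IsConfSim {A : Type} (R : Proc A → Proc A → Prop) : Prop :=
  ∀ p q, R p q →
    initials p ⊆ initials q ∧
    (∀ a q', Step q a q' → a ∈ initials p → ∃ p', Step p a p' ∧ R p' q')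

/-- The conformance simulation preorder `p ≲_CS q`. -/
def csLe {A : Type} (p q : Proc A) : Prop := ∃ R, IsConfSim R ∧ R p q

/-- Conformance simulation equivalence `p ≡_CS q`. -/
def csEq {A : Type} (p q : Proc A) : Prop := csLe p q ∧ csLe q p

/-- The conformance precongruence `p ⊑_CS q`. -/
def csPre {A : Type} (p q : Proc A) : Prop := csLe p q ∧ initials q ⊆ initials p

/-- Plain simulation. -/
def IsSim {A : Type} (S : Proc A → Proc A → Prop) : Prop :=
  ∀ p q, S p q → ∀ a p', Step p a p' → ∃ q', Step q a q' ∧ S p' q'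

/-- The plain simulation preorder `p ≲_S q`. -/
def simLe {A : Type} (p q : Proc A) : Prop := ∃ S, IsSim S ∧ S p q

/-- Ready simulation. -/
def IsRSim {A : Type} (S : Proc A → Proc A → Prop) : Prop :=
  ∀ p q, S p q → initials p = initials q ∧
    (∀ a p', Step p a p' → ∃ q', Step q a q' ∧ S p' q')

/-- The ready simulation preorder `p ≲_RS q`. -/
def rsLe {A : Type} (p q : Proc A) : Prop := ∃ S, IsRSim S ∧ S p q

/-- Ready conformance simulation: a conformance simulation that additionally
guarantees `I(q) ⊆ I(p)` for all related pairs. -/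
def IsRCSim {A : Type} (R : Proc A → Proc A → Prop) : Prop :=
  IsConfSim R ∧ ∀ p q, R p q → initials q ⊆ initials p

/-- The ready conformance simulation preorder `p ≲_RCS q`. -/
def rcsLe {A : Type} (p q : Proc A) : Prop := ∃ R, IsRCSim R ∧ R p q

/-- Open BCCSP terms (with variables indexed by `ℕ`). -/
inductive Term (A : Type) : Type
  | var : ℕ → Term A
  | nil : Term A
  | pre : A → Term A → Term A
  | add : Term A → Term A → Term A

/-- Closed substitution applied to an open term. -/
def Term.subst {A : Type} (σ : ℕ → Proc A) : Term A → Proc A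
  | .var n => σ n
  | .nil => .nil
  | .pre a t => .pre a (t.subst σ)
  | .add s t => .add (s.subst σ) (t.subst σ)

/-- View a closed process as an (open) term. -/
def Proc.toTerm {A : Type} : Proc A → Term A
  | .nil => .nil
  | .pre a p => .pre a p.toTerm
  | .add p q => .add p.toTerm q.toTerm

/-- Inequational derivability (between closed processes) from a set `E` of
inequations between open terms: the least relation containing all substitution
instances of `E` and closed under reflexivity, transitivity and the congruence
rules for prefixing and `+`. -/
inductive DerivLe {A : Type} (E : Set (Term A × Term A)) : Proc A → Proc A → Prop
  | ax (l r : Term A) (σ : ℕ → Proc A) : (l, r) ∈ E → DerivLe E (l.subst σ) (r.subst σ)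
  | refl (p : Proc A) : DerivLe E p p
  | trans {p q r : Proc A} : DerivLe E p q → DerivLe E q r → DerivLe E p r
  | pre (a : A) {p q : Proc A} : DerivLe E p q → DerivLe E (.pre a p) (.pre a q)
  | add {p q r s : Proc A} : DerivLe E p q → DerivLe E r s → DerivLe E (.add p r) (.add q s)

/-- Equational derivability (between closed processes) from a set `E` of
equations between open terms. -/
inductive DerivEq {A : Type} (E : Set (Term A × Term A)) : Proc A → Proc A → Prop
  | ax (l r : Term A) (σ : ℕ → Proc A) : (l, r) ∈ E → DerivEq E (l.subst σ) (r.subst σ)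
  | refl (p : Proc A) : DerivEq E p p
  | symm {p q : Proc A} : DerivEq E p q → DerivEq E q p
  | trans {p q r : Proc A} : DerivEq E p q → DerivEq E q r → DerivEq E p r
  | pre (a : A) {p q : Proc A} : DerivEq E p q → DerivEq E (.pre a p) (.pre a q)
  | add {p q r s : Proc A} : DerivEq E p q → DerivEq E r s → DerivEq E (.add p r) (.add q s)

/-- Substitution of (possibly open) terms for variables. -/
def Term.substT {A : Type} (σ : ℕ → Term A) : Term A → Term A
  | .var n => σ n
  | .nil => .nil
  | .pre a t => .pre a (t.substT σ)
  | .add s t => .add (s.substT σ) (t.substT σ)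

/-- Equational derivability between open terms from a set `E` of equations. -/
inductive TDerivEq {A : Type} (E : Set (Term A × Term A)) : Term A → Term A → Prop
  | ax (l r : Term A) (σ : ℕ → Term A) : (l, r) ∈ E → TDerivEq E (l.substT σ) (r.substT σ)
  | refl (t : Term A) : TDerivEq E t t
  | symm {s t : Term A} : TDerivEq E s t → TDerivEq E t s
  | trans {s t u : Term A} : TDerivEq E s t → TDerivEq E t u → TDerivEq E s u
  | pre (a : A) {s t : Term A} : TDerivEq E s t → TDerivEq E (.pre a s) (.pre a t)
  | add {s t u v : Term A} : TDerivEq E s t → TDerivEq E u v → TDerivEq E (.add s u) (.add t v)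

/-- The bisimulation axioms B1–B4, as equations. -/
def BEqns (A : Type) : Set (Term A × Term A) :=
  { (.add (.var 0) (.var 1), .add (.var 1) (.var 0)),
    (.add (.add (.var 0) (.var 1)) (.var 2), .add (.var 0) (.add (.var 1) (.var 2))),
    (.add (.var 0) (.var 0), .var 0),
    (.add (.var 0) .nil, .var 0) }

/-- The bisimulation axioms B1–B4, each used as two inequations. -/
def BIneqs (A : Type) : Set (Term A × Term A) := BEqns A ∪ Prod.swap '' BEqns A

/-- `npre a n p` is the `n`-fold prefixing `a.a.···.a.p`. -/
def npre {A : Type} (a : A) : ℕ → Proc A → Proc A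
  | 0, p => p
  | n + 1, p => .pre a (npre a n p)

/-! `a_r` is purely covariant, so a process may leave an `a_r`-move of its partner unmatched.
Hence `p_n ≲ q_n`, the extra summand `a_r.(a_bi^n.0)` of `q_n` never being asked for.
Conversely `0 ≲ a_r.0`, prefixing preserves `≲_CC`, and a sum lies below anything both summands
lie below, so `q_n ≲ p_n`. -/

section Step

variable {A : Type} {a b : A} {p q r p' : Proc A}

theorem not_step_nil : ¬Step .nil a p := nofun

theorem step_pre_iff : Step (.pre a p) b p' ↔ b = a ∧ p' = p := by
  constructor
  · rintro ⟨⟩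
    exact ⟨rfl, rfl⟩
  · rintro ⟨rfl, rfl⟩
    exact .pre _ _

theorem step_add_iff : Step (.add p q) a r ↔ Step p a r ∨ Step q a r := by
  constructor
  · rintro (_ | ⟨_, h⟩ | ⟨_, h⟩)
    exacts [.inl h, .inr h]
  · rintro (h | h)
    exacts [.addL q h, .addR p h]

theorem initials_pre : initials (.pre a p) = {a} := by
  ext b
  simp only [initials, step_pre_iff, Set.mem_ofPred_eq, Set.mem_singleton_iff, exists_and_left, exists_eq, and_true]

end Step

section CCSim

variable {A : Type} {Ar Al Abi : Set A} {p q r : Proc A}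

theorem isCCSim_ccLe : IsCCSim Ar Al Abi (ccLe Ar Al Abi) := by
  rintro p q ⟨S, hS, hpq⟩
  obtain ⟨hfwd, hbwd⟩ := hS p q hpq
  exact ⟨fun a ha p' h => (hfwd a ha p' h).imp fun _ ⟨hq', hS'⟩ => ⟨hq', S, hS, hS'⟩,
    fun a ha q' h => (hbwd a ha q' h).imp fun _ ⟨hp', hS'⟩ => ⟨hp', S, hS, hS'⟩⟩

theorem ccLe_iff :
    ccLe Ar Al Abi p q ↔
      (∀ a ∈ Ar ∪ Abi, ∀ p', Step p a p' → ∃ q', Step q a q' ∧ ccLe Ar Al Abi p' q') ∧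
      (∀ a ∈ Al ∪ Abi, ∀ q', Step q a q' → ∃ p', Step p a p' ∧ ccLe Ar Al Abi p' q') := by
  refine ⟨isCCSim_ccLe p q, fun ⟨hfwd, hbwd⟩ =>
    ⟨fun x y => ccLe Ar Al Abi x y ∨ (x = p ∧ y = q), ?_, .inr ⟨rfl, rfl⟩⟩⟩
  rintro x y (hxy | ⟨rfl, rfl⟩)
  · obtain ⟨hf, hb⟩ := isCCSim_ccLe x y hxy
    exact ⟨fun a ha x' h => (hf a ha x' h).imp fun _ => And.imp_right .inl,
      fun a ha y' h => (hb a ha y' h).imp fun _ => And.imp_right .inl⟩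
  · exact ⟨fun a ha x' h => (hfwd a ha x' h).imp fun _ => And.imp_right .inl,
      fun a ha y' h => (hbwd a ha y' h).imp fun _ => And.imp_right .inl⟩

theorem ccLe_refl (p : Proc A) : ccLe Ar Al Abi p p := by
  refine ⟨Eq, ?_, rfl⟩
  rintro p _ rfl
  exact ⟨fun a _ p' h => ⟨p', h, rfl⟩, fun a _ q' h => ⟨q', h, rfl⟩⟩

theorem ccLe_nil_left (hr : Disjoint (initials r) (Al ∪ Abi)) : ccLe Ar Al Abi .nil r :=
  ccLe_iff.2 ⟨fun _ _ _ h => (not_step_nil h).elim,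
    fun _ ha q' h => (Set.disjoint_left.mp hr ⟨q', h⟩ ha).elim⟩

theorem ccLe.pre (h : ccLe Ar Al Abi p q) (a : A) : ccLe Ar Al Abi (.pre a p) (.pre a q) := by
  refine ccLe_iff.2 ⟨fun b _ p' hp => ?_, fun b _ q' hq => ?_⟩
  · obtain ⟨rfl, rfl⟩ := step_pre_iff.1 hp
    exact ⟨q, .pre _ _, h⟩
  · obtain ⟨rfl, rfl⟩ := step_pre_iff.1 hq
    exact ⟨p, .pre _ _, h⟩

theorem ccLe.npre (h : ccLe Ar Al Abi p q) (a : A) (n : ℕ) :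
    ccLe Ar Al Abi (npre a n p) (npre a n q) := by
  induction n with
  | zero => exact h
  | succ n ih => exact ih.pre a

theorem add_ccLe (hp : ccLe Ar Al Abi p r) (hq : ccLe Ar Al Abi q r) :
    ccLe Ar Al Abi (.add p q) r := by
  refine ccLe_iff.2 ⟨fun a ha x h => ?_, fun a ha r' h => ?_⟩
  · rcases step_add_iff.1 h with h | h
    exacts [(ccLe_iff.1 hp).1 a ha x h, (ccLe_iff.1 hq).1 a ha x h]
  · obtain ⟨p', hp', hle⟩ := (ccLe_iff.1 hp).2 a ha r' h
    exact ⟨p', .addL q hp', hle⟩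

theorem ccLe_self_add (hr : Disjoint (initials r) (Al ∪ Abi)) :
    ccLe Ar Al Abi p (.add p r) := by
  refine ccLe_iff.2 ⟨fun a _ p' h => ⟨p', .addL r h, ccLe_refl p'⟩, fun a ha q' h => ?_⟩
  rcases step_add_iff.1 h with h | h
  · exact ⟨q', h, ccLe_refl q'⟩
  · exact (Set.disjoint_left.mp hr ⟨q', h⟩ ha).elim

end CCSim

theorem cc_counterexample_equiv_general {A : Type} (Ar Al Abi : Set A)
    (hpart : IsPartition Ar Al Abi)
    (abi ar : A) (har : ar ∈ Ar) (n : ℕ) :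
    ccEq Ar Al Abi
      (.pre ar (npre abi n (.pre ar .nil)))
      (.add (.pre ar (npre abi n (.pre ar .nil)))
            (.pre ar (npre abi n .nil))) := by
  obtain ⟨-, hrl, hrbi, -⟩ := hpart
  have hcov (p : Proc A) : Disjoint (initials (.pre ar p)) (Al ∪ Abi) := by
    rw [initials_pre, Set.disjoint_singleton_left]
    rintro (h | h)
    exacts [Set.disjoint_left.mp hrl har h, Set.disjoint_left.mp hrbi har h]
  exact ⟨ccLe_self_add (hcov _),
    add_ccLe (ccLe_refl _) (((ccLe_nil_left (hcov .nil)).npre abi n).pre ar)⟩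

/-- For `a_bi ∈ A^bi` and `a_r ∈ A^r`, the processes
`p_n = a_r.(a_bi^n.(a_r.0))` and `q_n = a_r.(a_bi^n.(a_r.0)) + a_r.(a_bi^n.0)`
are covariant-contravariant simulation equivalent. -/
theorem cc_counterexample_equiv {A : Type} (Ar Al Abi : Set A)
    (hpart : IsPartition Ar Al Abi)
    (abi ar : A) (habi : abi ∈ Abi) (har : ar ∈ Ar) (n : ℕ) :
    ccEq Ar Al Abi
      (.pre ar (npre abi n (.pre ar .nil)))
      (.add (.pre ar (npre abi n (.pre ar .nil)))
            (.pre ar (npre abi n .nil))) :=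
  cc_counterexample_equiv_general Ar Al Abi hpart abi ar har n
end

section
/- For all closed BCCSP processes p, q: if p ⊑_CS q then the equation p = p + q is equationally derivable from the axiom set A_CS^≡. -/
/-- The axiom set `A_CS^≡`: B1–B4 together with all closed instances
`a.p = a.p + a.(p + q)` with `I(p) ∩ I(q) = ∅` and all closed instances
`a.(p + q) = a.(p + q) + a.p` with `I(q) ⊆ I(p)`. -/
def ACSEqns (A : Type) : Set (Term A × Term A) :=
  BEqns A ∪
  { e | ∃ (a : A) (p q : Proc A), initials p ∩ initials q = ∅ ∧
        e = ((Proc.pre a p).toTerm,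
             (Proc.add (.pre a p) (.pre a (.add p q))).toTerm) } ∪
  { e | ∃ (a : A) (p q : Proc A), initials q ⊆ initials p ∧
        e = ((Proc.pre a (.add p q)).toTerm,
             (Proc.add (.pre a (.add p q)) (.pre a p)).toTerm) }

/-!
By recursion on `p`, it suffices to absorb each summand `a.q'` of `q` into `p`. Conformance gives
`p --a--> p'` with `p' ≲_CS q'`, and then `p' ⊑_CS q'₁`, where `q'₁` keeps the summands of `q'`
whose action lies in `I(p')`; recursively `p' = p' + q'₁`. Writing `q'₂` for the remaining
summands, the first conditional axiom (`I(p') ∩ I(q'₂) = ∅`) gives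
`a.p' = a.p' + a.(p' + q'₂) = a.p' + a.(q' + p')` (as `p' + q'₂ = p' + q'₁ + q'₂ = p' + q'`),
and the second (`I(p') ⊆ I(q')`) gives `a.(q' + p') = a.(q' + p') + a.q'`, so `a.p' = a.p' + a.q'` and
`p = p + a.p' = p + a.q'`.
-/

section

variable {A : Type}

local notation:50 p:51 " ≈[" E "] " q:51 => DerivEq E p q

theorem Step.sizeOf_lt {p p' : Proc A} {a : A} (h : Step p a p') : sizeOf p' < sizeOf p := by
  induction h <;> simp <;> omega

namespace Proc

open Classical in
noncomputable def restrict (S : Set A) : Proc A → Proc A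
  | nil => nil
  | pre a p => if a ∈ S then pre a p else nil
  | add p q => add (p.restrict S) (q.restrict S)

theorem step_restrict_iff {S : Set A} {q q' : Proc A} {a : A} :
    Step (q.restrict S) a q' ↔ a ∈ S ∧ Step q a q' := by
  induction q with
  | nil => simp only [restrict]; exact ⟨nofun, nofun⟩
  | pre b p =>
    by_cases hb : b ∈ S
    · simp only [restrict, if_pos hb]
      constructor
      · rintro ⟨⟩; exact ⟨hb, .pre _ _⟩
      · rintro ⟨-, ⟨⟩⟩; exact .pre _ _
    · simp only [restrict, if_neg hb]
      constructor
      · nofun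
      · rintro ⟨ha, ⟨⟩⟩; exact absurd ha hb
  | add r s ihr ihs =>
    simp only [restrict]
    constructor
    · intro h
      cases h with
      | addL _ h => exact (ihr.1 h).imp_right (.addL _)
      | addR _ h => exact (ihs.1 h).imp_right (.addR _)
    · rintro ⟨ha, h⟩
      cases h with
      | addL _ h => exact .addL _ (ihr.2 ⟨ha, h⟩)
      | addR _ h => exact .addR _ (ihs.2 ⟨ha, h⟩)

theorem initials_restrict (S : Set A) (q : Proc A) :
    initials (q.restrict S) = S ∩ initials q := by
  ext a
  simp only [initials, Set.mem_ofPred_eq, Set.mem_inter_iff, step_restrict_iff, exists_and_left]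

theorem toTerm_subst (σ : ℕ → Proc A) (p : Proc A) : p.toTerm.subst σ = p := by
  induction p <;> simp_all [toTerm, Term.subst]

end Proc

namespace csLe

theorem initials_subset {p q : Proc A} (h : csLe p q) : initials p ⊆ initials q := by
  obtain ⟨R, hR, hpq⟩ := h
  exact (hR p q hpq).1

theorem exists_step {p q q' : Proc A} {a : A} (h : csLe p q) (hq : Step q a q')
    (ha : a ∈ initials p) : ∃ p', Step p a p' ∧ csLe p' q' := by
  obtain ⟨R, hR, hpq⟩ := h
  obtain ⟨p', hp, hR'⟩ := (hR p q hpq).2 a q' hq ha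
  exact ⟨p', hp, R, hR, hR'⟩

theorem csPre_restrict_initials {p q : Proc A} (h : csLe p q) :
    csPre p (q.restrict (initials p)) := by
  obtain ⟨R, hR, hpq⟩ := h
  have hI : initials (q.restrict (initials p)) = initials p := by
    rw [Proc.initials_restrict, Set.inter_eq_left.2 (hR p q hpq).1]
  refine ⟨⟨fun x y => R x y ∨ (x = p ∧ y = q.restrict (initials p)), ?_, .inr ⟨rfl, rfl⟩⟩,
    hI.le⟩
  rintro x y (hxy | ⟨rfl, rfl⟩)
  · refine ⟨(hR x y hxy).1, fun a y' hy ha => ?_⟩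
    obtain ⟨x', hx, hR'⟩ := (hR x y hxy).2 a y' hy ha
    exact ⟨x', hx, .inl hR'⟩
  · refine ⟨hI.ge, fun a y' hy ha => ?_⟩
    obtain ⟨x', hx, hR'⟩ := (hR _ _ hpq).2 a y' (Proc.step_restrict_iff.1 hy).2 ha
    exact ⟨x', hx, .inl hR'⟩

end csLe

namespace DerivEq

variable {E : Set (Term A × Term A)}

instance : Trans (DerivEq E) (DerivEq E) (DerivEq E) := ⟨DerivEq.trans⟩

theorem add_comm (hB : BEqns A ⊆ E) (p q : Proc A) : .add p q ≈[E] .add q p := by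
  simpa [Term.subst] using DerivEq.ax (E := E) (.add (.var 0) (.var 1)) (.add (.var 1) (.var 0))
    (fun n => if n = 0 then p else q) (hB (by simp [BEqns]))

theorem add_assoc (hB : BEqns A ⊆ E) (p q r : Proc A) :
    .add (.add p q) r ≈[E] .add p (.add q r) := by
  simpa [Term.subst] using DerivEq.ax (E := E)
    (.add (.add (.var 0) (.var 1)) (.var 2)) (.add (.var 0) (.add (.var 1) (.var 2)))
    (fun n => if n = 0 then p else if n = 1 then q else r) (hB (by simp [BEqns]))

theorem add_self (hB : BEqns A ⊆ E) (p : Proc A) : .add p p ≈[E] p := by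
  simpa [Term.subst] using DerivEq.ax (E := E) (.add (.var 0) (.var 0)) (.var 0)
    (fun _ => p) (hB (by simp [BEqns]))

theorem add_nil (hB : BEqns A ⊆ E) (p : Proc A) : .add p .nil ≈[E] p := by
  simpa [Term.subst] using DerivEq.ax (E := E) (.add (.var 0) .nil) (.var 0)
    (fun _ => p) (hB (by simp [BEqns]))

theorem add_add_add_comm (hB : BEqns A ⊆ E) (p q r s : Proc A) :
    .add (.add p q) (.add r s) ≈[E] .add (.add p r) (.add q s) :=
  calc .add (.add p q) (.add r s) ≈[E] .add p (.add q (.add r s)) := add_assoc hB _ _ _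
    _ ≈[E] .add p (.add (.add q r) s) := .add (.refl p) (add_assoc hB _ _ _).symm
    _ ≈[E] .add p (.add (.add r q) s) := .add (.refl p) (.add (add_comm hB _ _) (.refl s))
    _ ≈[E] .add p (.add r (.add q s)) := .add (.refl p) (add_assoc hB _ _ _)
    _ ≈[E] .add (.add p r) (.add q s) := (add_assoc hB _ _ _).symm

theorem absorb_trans (hB : BEqns A ⊆ E) {p q r : Proc A} (hpq : p ≈[E] .add p q)
    (hqr : q ≈[E] .add q r) : p ≈[E] .add p r :=
  calc p ≈[E] .add p q := hpq
    _ ≈[E] .add p (.add q r) := .add (.refl p) hqr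
    _ ≈[E] .add (.add p q) r := (add_assoc hB p q r).symm
    _ ≈[E] .add p r := .add hpq.symm (.refl r)

theorem absorb_of_step (hB : BEqns A ⊆ E) {p p' : Proc A} {a : A} (h : Step p a p') :
    p ≈[E] .add p (.pre a p') := by
  induction h with
  | pre a p => exact (add_self hB _).symm
  | @addL r b r' s _ ih =>
    calc .add r s ≈[E] .add (.add r (.pre b r')) s := .add ih (.refl s)
      _ ≈[E] .add r (.add (.pre b r') s) := add_assoc hB _ _ _
      _ ≈[E] .add r (.add s (.pre b r')) := .add (.refl r) (add_comm hB _ _)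
      _ ≈[E] .add (.add r s) (.pre b r') := (add_assoc hB _ _ _).symm
  | @addR s b s' r _ ih =>
    calc .add r s ≈[E] .add r (.add s (.pre b s')) := .add (.refl r) ih
      _ ≈[E] .add (.add r s) (.pre b s') := (add_assoc hB _ _ _).symm

theorem absorb_of_forall_step (hB : BEqns A ⊆ E) {p q : Proc A}
    (h : ∀ a q', Step q a q' → p ≈[E] .add p (.pre a q')) : p ≈[E] .add p q := by
  induction q with
  | nil => exact (add_nil hB p).symm
  | pre a q' => exact h a q' (.pre a q')
  | add r s ihr ihs =>
    have hr := ihr fun a q' hq => h a q' (.addL s hq)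
    have hs := ihs fun a q' hq => h a q' (.addR r hq)
    calc p ≈[E] .add p s := hs
      _ ≈[E] .add (.add p r) s := .add hr (.refl s)
      _ ≈[E] .add p (.add r s) := add_assoc hB _ _ _

theorem restrict_add_restrict_compl (hB : BEqns A ⊆ E) (S : Set A) (q : Proc A) :
    q ≈[E] .add (q.restrict S) (q.restrict Sᶜ) := by
  induction q with
  | nil => exact (add_nil hB _).symm
  | pre a q' =>
    by_cases ha : a ∈ S
    · simpa [Proc.restrict, ha] using (add_nil hB _).symm
    · simpa [Proc.restrict, ha] using ((add_nil hB _).symm.trans (add_comm hB _ _))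
  | add r s ihr ihs => exact (DerivEq.add ihr ihs).trans (add_add_add_comm hB _ _ _ _)

end DerivEq

theorem BEqns_subset_ACSEqns : BEqns A ⊆ ACSEqns A :=
  Set.subset_union_left.trans Set.subset_union_left

namespace DerivEq

theorem pre_absorb_of_disjoint (a : A) {p q : Proc A} (h : initials p ∩ initials q = ∅) :
    .pre a p ≈[ACSEqns A] .add (.pre a p) (.pre a (.add p q)) := by
  simpa [Proc.toTerm_subst] using DerivEq.ax (E := ACSEqns A) _ _ (fun _ => .nil)
    (.inl (.inr ⟨a, p, q, h, rfl⟩))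

theorem pre_add_absorb_of_subset (a : A) {p q : Proc A} (h : initials q ⊆ initials p) :
    .pre a (.add p q) ≈[ACSEqns A] .add (.pre a (.add p q)) (.pre a p) := by
  simpa [Proc.toTerm_subst] using DerivEq.ax (E := ACSEqns A) _ _ (fun _ => .nil)
    (.inr ⟨a, p, q, h, rfl⟩)

theorem pre_absorb_pre (a : A) {p q : Proc A} (hI : initials p ⊆ initials q)
    (h : p ≈[ACSEqns A] .add p (q.restrict (initials p))) :
    .pre a p ≈[ACSEqns A] .add (.pre a p) (.pre a q) := by
  have hB := BEqns_subset_ACSEqns (A := A)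
  set q₂ := q.restrict (initials p)ᶜ
  have hdisj : initials p ∩ initials q₂ = ∅ := by
    rw [Proc.initials_restrict, ← Set.inter_assoc, Set.inter_compl_self, Set.empty_inter]
  have hq₂ : .add p q₂ ≈[ACSEqns A] .add q p :=
    calc .add p q₂ ≈[ACSEqns A] .add (.add p (q.restrict (initials p))) q₂ := .add h (.refl q₂)
      _ ≈[ACSEqns A] .add p (.add (q.restrict (initials p)) q₂) := add_assoc hB _ _ _
      _ ≈[ACSEqns A] .add p q := .add (.refl p) (restrict_add_restrict_compl hB _ q).symm
      _ ≈[ACSEqns A] .add q p := add_comm hB p q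
  have hp : .pre a p ≈[ACSEqns A] .add (.pre a p) (.pre a (.add q p)) :=
    (pre_absorb_of_disjoint a hdisj).trans (.add (.refl _) (.pre a hq₂))
  exact absorb_trans hB hp (pre_add_absorb_of_subset a hI)

end DerivEq

end

/-- If `p ⊑_CS q` then `p = p + q` is derivable from `A_CS^≡`. -/
theorem csPre_implies_derivable {A : Type} (p q : Proc A) (h : csPre p q) :
    DerivEq (ACSEqns A) p (.add p q) := by
  refine DerivEq.absorb_of_forall_step BEqns_subset_ACSEqns fun a q' hq' => ?_
  obtain ⟨p', hp', hle⟩ := h.1.exists_step hq' (h.2 ⟨q', hq'⟩)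
  have ih := csPre_implies_derivable p' _ hle.csPre_restrict_initials
  exact DerivEq.absorb_trans BEqns_subset_ACSEqns (DerivEq.absorb_of_step BEqns_subset_ACSEqns hp')
    (DerivEq.pre_absorb_pre a hle.initials_subset ih)
termination_by p
decreasing_by exact hp'.sizeOf_lt
end
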